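/- arXiv:2501.18926 — 4 statements merged into one kernel-verified Lean document; each statement's English description precedes it below -/
import Mathlib

section
/- Let R be a commutative integral domain, F ∈ R nonzero, and A, B ∈ Mat_{b×b}(R) with AB = BA = F·Id. Then the image of B is contained in the kernel of multiplication followed by projection, and moreover ker(A) composed with the quotient yields exactness: Im(B : (R/(F))^b → (R/(F))^b) = Ker(A : (R/(F))^b → (R/(F))^b), where A, B denote the induced maps on (R/(F))^b. -/
/-- If `(A, B)` is a matrix factorization of a nonzero `F` in an integral domain `R`,
then the reductions of `A` and `B` modulo `(F)` give an exact 2-periodic complex on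
`(R/(F))^b`: the image of the reduction of `B` equals the kernel of the reduction of `A`. -/
theorem matrix_factorization_exactness {R : Type*} [CommRing R] [IsDomain R]
    {b : ℕ} (hb : 1 ≤ b) (F : R) (hF : F ≠ 0) (A B : Matrix (Fin b) (Fin b) R)
    (hAB : A * B = F • (1 : Matrix (Fin b) (Fin b) R))
    (hBA : B * A = F • (1 : Matrix (Fin b) (Fin b) R)) :
    LinearMap.range
        (Matrix.mulVecLin (B.map (Ideal.Quotient.mk (Ideal.span {F})))) =
      LinearMap.ker
        (Matrix.mulVecLin (A.map (Ideal.Quotient.mk (Ideal.span {F})))) := by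
  set π := Ideal.Quotient.mk (Ideal.span {F}) with hπ
  have hπF : π F = 0 := by
    rw [Ideal.Quotient.eq_zero_iff_mem]
    exact Ideal.subset_span rfl
  apply le_antisymm
  · rintro y ⟨w, rfl⟩
    simp only [LinearMap.mem_ker, Matrix.mulVecLin_apply]
    rw [Matrix.mulVec_mulVec, ← Matrix.map_mul, hAB]
    have : (F • (1 : Matrix (Fin b) (Fin b) R)).map π = 0 := by
      ext i j
      simp [Matrix.smul_apply, Matrix.one_apply, hπF, apply_ite π]
    rw [this, Matrix.zero_mulVec]
  · intro x hx
    simp only [LinearMap.mem_ker, Matrix.mulVecLin_apply] at hx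
    -- lift x
    obtain ⟨v, hv⟩ : ∃ v : Fin b → R, π ∘ v = x := by
      choose v hv using fun i => Ideal.Quotient.mk_surjective (x i)
      exact ⟨v, funext hv⟩
    -- each entry of A *ᵥ v lies in (F)
    have hmem : ∀ i, (A.mulVec v) i ∈ Ideal.span ({F} : Set R) := by
      intro i
      rw [← Ideal.Quotient.eq_zero_iff_mem]
      have := RingHom.map_mulVec π A v i
      rw [hv] at this
      rw [show (Ideal.Quotient.mk (Ideal.span {F})) (A.mulVec v i) = π (A.mulVec v i) from rfl,
        this, hx]
      rfl
    choose w hw using fun i => Ideal.mem_span_singleton'.mp (hmem i)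
    -- B *ᵥ (A *ᵥ v) = F • v, also = F • (B *ᵥ w)
    have key : ∀ i, F * v i = F * (B.mulVec w) i := by
      intro i
      have h1 : (B.mulVec (A.mulVec v)) i = F * v i := by
        rw [Matrix.mulVec_mulVec, hBA]
        simp [Matrix.smul_mulVec]
      have h2 : A.mulVec v = fun i => F * w i := by
        funext i; rw [← hw i, mul_comm]
      rw [← h1, h2]
      simp only [Matrix.mulVec, dotProduct]
      rw [Finset.mul_sum]
      congr 1; funext j; ring
    have hv' : v = B.mulVec w := by
      funext i
      exact mul_left_cancel₀ hF (key i)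
    refine ⟨π ∘ w, ?_⟩
    rw [Matrix.mulVecLin_apply, ← hv, hv']
    funext i
    exact (RingHom.map_mulVec π B w i).symm
end

section
/- Let A be a commutative integral domain with fraction field K, M a faithful A-submodule of K containing an element e ≠ 0, and α ∈ A \ {0} with α·M ⊆ e·A ⊆ M. Suppose every A-linear map e·A → M extends to an A-linear map M → M. Then M carries a unique structure of commutative A-algebra with identity element e, with multiplication defined by q₁ * q₂ = f̃_{q₁}(q₂) where f̃_{q₁} lifts the map f_{q₁}(ew) = w·q₁; moreover this product is commutative: f̃_{q₁}(q₂) = f̃_{q₂}(q₁). -/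
/-- Let `A` be a domain with fraction field `K`, `M ⊆ K` an `A`-submodule,
`e ∈ M` nonzero, and `α ∈ A` nonzero with `α·M ⊆ e·A ⊆ M`.  For `q ∈ M` let
`f_q : eA → M` be the `A`-linear map `f_q(w•e) = w•q`, and assume every `f_q`
admits an `A`-linear extension (lifting) `f̃_q : M → M`.  Then the product
`q₁ * q₂ := f̃_{q₁}(q₂)` is well defined and commutative — any liftings satisfy
`f̃_{q₁}(q₂) = f̃_{q₂}(q₁)` — and `e` is an identity element: any lifting of `f_e`
is the identity map of `M`. -/
theorem algebra_structure_on_coker {A : Type*} [CommRing A] [IsDomain A]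
    (M : Submodule A (FractionRing A))
    (e : FractionRing A) (he : e ∈ M) (he0 : e ≠ 0)
    (α : A) (hα : α ≠ 0)
    (hcond : ∀ m ∈ M, ∃ a : A, α • m = a • e)
    (hlift : ∀ q, ∀ hq : q ∈ M, ∃ g : M →ₗ[A] M,
      ∀ w : A, g ⟨w • e, M.smul_mem w he⟩ = w • (⟨q, hq⟩ : M)) :
    (∀ q₁ q₂, ∀ hq₁ : q₁ ∈ M, ∀ hq₂ : q₂ ∈ M, ∀ g₁ g₂ : M →ₗ[A] M,
      (∀ w : A, g₁ ⟨w • e, M.smul_mem w he⟩ = w • (⟨q₁, hq₁⟩ : M)) →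
      (∀ w : A, g₂ ⟨w • e, M.smul_mem w he⟩ = w • (⟨q₂, hq₂⟩ : M)) →
      g₁ ⟨q₂, hq₂⟩ = g₂ ⟨q₁, hq₁⟩) ∧
    (∀ g : M →ₗ[A] M,
      (∀ w : A, g ⟨w • e, M.smul_mem w he⟩ = w • (⟨e, he⟩ : M)) →
      ∀ m : M, g m = m) := by
  have hinjK : ∀ x y : FractionRing A, α • x = α • y → x = y := by
    intro x y h
    exact smul_right_injective (FractionRing A) hα h
  have hinj : ∀ x y : M, α • x = α • y → x = y := by
    intro x y h
    exact Subtype.ext (hinjK _ _ (congrArg Subtype.val h))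
  constructor
  · intro q₁ q₂ hq₁ hq₂ g₁ g₂ h₁ h₂
    obtain ⟨a₁, ha₁⟩ := hcond q₁ hq₁
    obtain ⟨a₂, ha₂⟩ := hcond q₂ hq₂
    apply hinj
    have e1 : α • g₁ ⟨q₂, hq₂⟩ = a₂ • (⟨q₁, hq₁⟩ : M) := by
      rw [← map_smul]
      have h : (α • (⟨q₂, hq₂⟩ : M)) = ⟨a₂ • e, M.smul_mem a₂ he⟩ := Subtype.ext ha₂
      rw [h, h₁ a₂]
    have e2 : α • g₂ ⟨q₁, hq₁⟩ = a₁ • (⟨q₂, hq₂⟩ : M) := by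
      rw [← map_smul]
      have h : (α • (⟨q₁, hq₁⟩ : M)) = ⟨a₁ • e, M.smul_mem a₁ he⟩ := Subtype.ext ha₁
      rw [h, h₂ a₁]
    rw [e1, e2]
    apply Subtype.ext
    show a₂ • q₁ = a₁ • q₂
    apply hinjK
    calc α • a₂ • q₁ = a₂ • (α • q₁) := smul_comm _ _ _
      _ = a₂ • a₁ • e := by rw [ha₁]
      _ = a₁ • a₂ • e := smul_comm _ _ _
      _ = a₁ • (α • q₂) := by rw [ha₂]
      _ = α • a₁ • q₂ := smul_comm _ _ _
  · intro g hg m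
    obtain ⟨a, ha⟩ := hcond m m.2
    apply hinj
    have h : (α • m : M) = ⟨a • e, M.smul_mem a he⟩ := Subtype.ext ha
    rw [← map_smul, h, hg a]
    exact (h.trans (Subtype.ext rfl)).symm ▸ h.symm
end

section
/- Let A be a one-dimensional Noetherian local domain with integral closure Ā (in its fraction field) a DVR, and let B₁, B₂ be intermediate rings A ⊆ Bᵢ ⊆ Ā that are A-algebras, with the conductor of A in Ā nonzero. If φ : B₁ → B₂ is an isomorphism of A-modules fixing A (φ|_A = id), then φ is an isomorphism of A-algebras, i.e. φ(q₁ q₂) = φ(q₁)φ(q₂) for all q₁, q₂ ∈ B₁. -/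
/-!
For a nonzero conductor element `α` and `x ∈ B₁`, both `α` and `α * x` lie in `A`, so
`α * φ x = φ (α * x) = α * x`. Cancelling `α` shows that `φ` is the identity on `B₁`,
which is multiplicative.
-/

theorem eqOn_id_of_conductor {M₀ : Type*} [Mul M₀] [Zero M₀] [IsLeftCancelMulZero M₀]
    {A B : Set M₀} {φ : M₀ → M₀} {α : M₀} (hα : α ≠ 0) (hcond : ∀ x ∈ B, α * x ∈ A)
    (hlin : ∀ x ∈ B, φ (α * x) = α * φ x) (hid : ∀ a ∈ A, φ a = a) :
    Set.EqOn φ id B := fun x hx =>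
  mul_left_cancel₀ hα <| (hlin x hx).symm.trans (hid _ (hcond x hx))

theorem module_iso_is_algebra_iso_general {V : Type*} [CommRing V] [IsDomain V]
    (A B₁ : Subring V)
    (hcond : ∃ α ∈ A, α ≠ 0 ∧ ∀ v : V, α * v ∈ A)
    (φ : V → V)
    (hlin : ∀ a ∈ A, ∀ x ∈ B₁, φ (a * x) = a * φ x)
    (hid : ∀ a ∈ A, φ a = a) :
    ∀ x ∈ B₁, ∀ y ∈ B₁, φ (x * y) = φ x * φ y := by
  obtain ⟨α, hαA, hα, hαcond⟩ := hcond
  have hφ : Set.EqOn φ id (B₁ : Set V) :=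
    eqOn_id_of_conductor hα (fun x _ => hαcond x) (hlin α hαA) hid
  intro x hx y hy
  rw [hφ hx, hφ hy, hφ (B₁.mul_mem hx hy)]
  rfl

/-- Let `A` be a one-dimensional Noetherian local domain whose integral closure `Ā`
(in its fraction field) is a DVR `V`, with nonzero conductor, and let
`A ⊆ B₁, B₂ ⊆ V` be intermediate rings.  Any `A`-module isomorphism
`φ : B₁ → B₂` fixing `A` is automatically an isomorphism of `A`-algebras, i.e. it
is multiplicative. -/
theorem module_iso_is_algebra_iso {V : Type*} [CommRing V] [IsDomain V]
    [IsDiscreteValuationRing V]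
    (A B₁ B₂ : Subring V) (hAB₁ : A ≤ B₁) (hAB₂ : A ≤ B₂)
    (hNoeth : IsNoetherianRing A) (hLocal : IsLocalRing A)
    (hdim : ringKrullDim A = 1)
    (hint : ∀ v : V, IsIntegral A v)
    (hcond : ∃ α ∈ A, α ≠ 0 ∧ ∀ v : V, α * v ∈ A)
    (φ : V → V) (hmaps : Set.BijOn φ B₁ B₂)
    (hadd : ∀ x ∈ B₁, ∀ y ∈ B₁, φ (x + y) = φ x + φ y)
    (hlin : ∀ a ∈ A, ∀ x ∈ B₁, φ (a * x) = a * φ x)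
    (hid : ∀ a ∈ A, φ a = a) :
    ∀ x ∈ B₁, ∀ y ∈ B₁, φ (x * y) = φ x * φ y :=
  module_iso_is_algebra_iso_general A B₁ hcond φ hlin hid
end

section
/- Let R be a commutative integral domain, F ∈ R nonzero and not a unit, and (A, B) a matrix factorization of F on R^b with all entries of A in a proper ideal I (so that the induced resolution is minimal). Then the R/(F)-module M = coker(A) admits no nonzero free direct summand: there is no R/(F)-module decomposition M ≅ (R/(F)) ⊕ N. -/
/-- Let `R` be an integral domain, `F ∈ R` nonzero and not a unit, and `(A, B)` a
matrix factorization of `F` on `R^b` all of whose entries lie in a maximal ideal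
`𝔪` (minimality).  Then the cokernel `M = R^b / Im A` admits no nonzero free
direct summand: for no module `N` is `M ≅ R/(F) ⊕ N`. -/
theorem coker_no_free_summand {R : Type} [CommRing R] [IsDomain R]
    {b : ℕ} (F : R) (hF : F ≠ 0) (hFu : ¬ IsUnit F)
    (A B : Matrix (Fin b) (Fin b) R)
    (hAB : A * B = F • (1 : Matrix (Fin b) (Fin b) R))
    (hBA : B * A = F • (1 : Matrix (Fin b) (Fin b) R))
    (𝔪 : Ideal R) (h𝔪 : 𝔪.IsMaximal)
    (hAm : ∀ i j, A i j ∈ 𝔪) (hBm : ∀ i j, B i j ∈ 𝔪)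
    (N : Type) [AddCommGroup N] [Module R N] :
    IsEmpty
      (((Fin b → R) ⧸ LinearMap.range A.mulVecLin) ≃ₗ[R]
        (R ⧸ Ideal.span {F}) × N) := by
  constructor
  intro e
  classical
  set q : (Fin b → R) →ₗ[R] ((Fin b → R) ⧸ LinearMap.range A.mulVecLin) :=
    (LinearMap.range A.mulVecLin).mkQ with hq
  let ψ : (Fin b → R) →ₗ[R] R ⧸ Ideal.span {F} :=
    (LinearMap.fst R (R ⧸ Ideal.span {F}) N) ∘ₗ (e : _ →ₗ[R] _) ∘ₗ q
  have hψsurj : Function.Surjective ψ := by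
    simp only [ψ, LinearMap.coe_comp, LinearEquiv.coe_coe]
    exact Prod.fst_surjective.comp (e.surjective.comp (Submodule.mkQ_surjective _))
  -- choose lifts c
  have hc : ∀ j : Fin b, ∃ c : R,
      Ideal.Quotient.mk (Ideal.span {F}) c = ψ (Pi.single j 1) := fun j =>
    Ideal.Quotient.mk_surjective _
  choose c hcspec using hc
  have hψx : ∀ x : Fin b → R,
      ψ x = Ideal.Quotient.mk (Ideal.span {F}) (∑ i, x i * c i) := by
    intro x
    conv_lhs => rw [pi_eq_sum_univ x]
    rw [map_sum, map_sum]
    refine Finset.sum_congr rfl fun i _ => ?_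
    have hps : (fun j => if i = j then (1:R) else 0) = Pi.single i 1 := by
      ext j; simp [Pi.single_apply, eq_comm]
    rw [map_smul, hps, ← hcspec i, ← smul_eq_mul]
    exact (Submodule.Quotient.mk_smul _ _ _).symm
  -- columns of A are killed
  have hcol : ∀ j : Fin b, ∃ d : R, ∑ i, A i j * c i = F * d := by
    intro j
    have hmem : (fun i => A i j) ∈ LinearMap.range A.mulVecLin := by
      refine ⟨Pi.single j 1, ?_⟩
      ext i
      simp [Matrix.mulVecLin_apply, Matrix.mulVec, dotProduct, Pi.single_apply,
        mul_ite, Finset.sum_ite_eq, Finset.sum_ite_eq']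
    have h0 : ψ (fun i => A i j) = 0 := by
      have : q (fun i => A i j) = 0 := (Submodule.Quotient.mk_eq_zero _).2 hmem
      simp [ψ, this]
    rw [hψx] at h0
    have := (Ideal.Quotient.eq_zero_iff_mem).1 h0
    rw [Ideal.mem_span_singleton] at this
    obtain ⟨d, hd⟩ := this
    exact ⟨d, hd⟩
  choose d hd using hcol
  -- each c k lies in 𝔪
  have hcm : ∀ k : Fin b, c k ∈ 𝔪 := by
    intro k
    have key : F * (∑ j, d j * B j k) = F * c k := by
      have h1 : ∑ j, F * (d j * B j k) = ∑ j, ∑ i, A i j * c i * B j k := by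
        refine Finset.sum_congr rfl fun j _ => ?_
        rw [← mul_assoc, ← hd j, Finset.sum_mul]
      rw [← Finset.mul_sum] at h1
      rw [h1, Finset.sum_comm]
      have h2 : ∀ i, ∑ j, A i j * c i * B j k = c i * (A * B) i k := by
        intro i
        rw [Matrix.mul_apply, Finset.mul_sum]
        refine Finset.sum_congr rfl fun j _ => by ring
      simp_rw [h2, hAB]
      simp [Matrix.smul_apply, Matrix.one_apply, mul_ite, Finset.sum_ite_eq, Finset.sum_ite_eq']
      ring
    have hck : c k = ∑ j, d j * B j k := (mul_left_cancel₀ hF key).symm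
    rw [hck]
    exact Ideal.sum_mem _ fun j _ => Ideal.mul_mem_left _ _ (hBm j k)
  -- F ∈ span ⊆ 𝔪 etc., get contradiction
  obtain ⟨x, hx1⟩ := hψsurj (Ideal.Quotient.mk _ 1)
  rw [hψx] at hx1
  have hsub : (∑ i, x i * c i) - 1 ∈ Ideal.span {F} := by
    rw [← Ideal.Quotient.eq_zero_iff_mem, map_sub, hx1, sub_self]
  rcases Nat.eq_zero_or_pos b with hb | hb
  · subst hb
    simp only [Finset.univ_eq_empty, Finset.sum_empty, zero_sub] at hsub
    rw [Ideal.mem_span_singleton] at hsub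
    exact hFu (isUnit_of_dvd_unit hsub isUnit_one.neg)
  · have i0 : Fin b := ⟨0, hb⟩
    have hFm : F ∈ 𝔪 := by
      have : (A * B) i0 i0 = F := by rw [hAB]; simp [Matrix.smul_apply]
      rw [← this, Matrix.mul_apply]
      exact Ideal.sum_mem _ fun k _ => Ideal.mul_mem_right _ _ (hAm i0 k)
    have hspan : Ideal.span {F} ≤ 𝔪 := (Ideal.span_singleton_le_iff_mem _).2 hFm
    have h1 : (1 : R) ∈ 𝔪 := by
      have h2 : (∑ i, x i * c i) - 1 ∈ 𝔪 := hspan hsub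
      have h3 : (∑ i, x i * c i) ∈ 𝔪 :=
        Ideal.sum_mem _ fun i _ => Ideal.mul_mem_left _ _ (hcm i)
      have := 𝔪.sub_mem h3 h2
      simpa using this
    exact h𝔪.ne_top (Ideal.eq_top_iff_one _ |>.2 h1)
end
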